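/- arXiv:1405.6493 — 8 statements merged into one kernel-verified Lean document; each statement's English description precedes it below -/
import Mathlib

section
/- The set S = { [(n)_b 1]_{2b-1} : n ≥ 0 }, i.e., the set of natural numbers whose base-(2b-1) representation ends in digit 1 and has all other digits in {0,1,...,b-1}, is sum-free: no element of S is the sum of two elements of S. -/
/-- The set S = { [(n)_b 1]_{2b-1} : n ≥ 0 } is sum-free. -/
theorem stmt0 (b : ℕ) (hb : 2 ≤ b) :
    ∀ x y z : ℕ,
      (∃ n : ℕ, x = (2 * b - 1) * Nat.ofDigits (2 * b - 1) (Nat.digits b n) + 1) →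
      (∃ n : ℕ, y = (2 * b - 1) * Nat.ofDigits (2 * b - 1) (Nat.digits b n) + 1) →
      (∃ n : ℕ, z = (2 * b - 1) * Nat.ofDigits (2 * b - 1) (Nat.digits b n) + 1) →
      x + y ≠ z := by
  rintro x y z ⟨n₁, rfl⟩ ⟨n₂, rfl⟩ ⟨n₃, rfl⟩ h
  set q := 2 * b - 1 with hq
  have hq3 : 3 ≤ q := by omega
  set A := Nat.ofDigits q (Nat.digits b n₁)
  set B := Nat.ofDigits q (Nat.digits b n₂)
  set C := Nat.ofDigits q (Nat.digits b n₃)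
  have hC : q * C = q * (A + B) + 1 := by
    have := h
    zify at this ⊢
    linarith [this]
  have hd : q ∣ 1 := by
    have : q ∣ q * C := Dvd.intro C rfl
    rw [hC] at this
    exact (Nat.dvd_add_right (Dvd.intro (A + B) rfl)).mp this
  exact absurd (Nat.le_of_dvd one_pos hd) (by omega)
end

section
/- With S_n = (2b-1)·[(n)_b]_{2b-1} + 1, the sumset S + S equals exactly the arithmetic progression {(2b-1)m + 2 : m ∈ ℕ}. -/
open Pointwise

private lemma fstep (b : ℕ) (hb : 2 ≤ b) (n d : ℕ) (hd : d < b) :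
    Nat.ofDigits (2 * b - 1) (Nat.digits b (b * n + d)) =
      (2 * b - 1) * Nat.ofDigits (2 * b - 1) (Nat.digits b n) + d := by
  rcases Nat.eq_zero_or_pos (b * n + d) with h | h
  · have hn : n = 0 := by nlinarith
    have hd0 : d = 0 := by omega
    simp [hn, hd0]
  · rw [Nat.digits_def' (by omega : 1 < b) h]
    have hmod : (b * n + d) % b = d := by
      simp [Nat.mul_add_mod, Nat.mod_eq_of_lt hd]
    have hdiv : (b * n + d) / b = n := by
      rw [Nat.mul_add_div (by omega : 0 < b), Nat.div_eq_of_lt hd]; omega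
    rw [hmod, hdiv, Nat.ofDigits_cons]
    ring

private lemma split (b : ℕ) (hb : 2 ≤ b) (k : ℕ) :
    ∃ n1 n2 : ℕ,
      Nat.ofDigits (2 * b - 1) (Nat.digits b n1) +
        Nat.ofDigits (2 * b - 1) (Nat.digits b n2) = k := by
  induction k using Nat.strong_induction_on with
  | _ k ih =>
    rcases Nat.eq_zero_or_pos k with hk | hk
    · exact ⟨0, 0, by simp [hk]⟩
    · have hc3 : 3 ≤ 2 * b - 1 := by omega
      set q := k / (2 * b - 1) with hq
      set r := k % (2 * b - 1) with hr
      have hrc : r < 2 * b - 1 := Nat.mod_lt _ (by omega)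
      have hkqr : k = (2 * b - 1) * q + r := (Nat.div_add_mod k (2 * b - 1)).symm
      set r1 := min r (b - 1) with hr1
      set r2 := r - r1 with hr2
      have hr1b : r1 < b := by omega
      have hr2b : r2 < b := by omega
      have hr12 : r1 + r2 = r := by omega
      have hqk : q < k := Nat.div_lt_self hk (by omega)
      obtain ⟨n1, n2, hn⟩ := ih q hqk
      refine ⟨b * n1 + r1, b * n2 + r2, ?_⟩
      rw [fstep b hb n1 r1 hr1b, fstep b hb n2 r2 hr2b, hkqr, ← hn, ← hr12]
      ring

/-- With S_n = (2b-1)·[(n)_b]_{2b-1} + 1, the sumset S + S equals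
    {(2b-1)m + 2 : m ∈ ℕ}. -/
theorem stmt1 (b : ℕ) (hb : 2 ≤ b) (S : Set ℕ)
    (hS : S = {m : ℕ | ∃ n : ℕ,
      m = (2 * b - 1) * Nat.ofDigits (2 * b - 1) (Nat.digits b n) + 1}) :
    S + S = {m : ℕ | ∃ k : ℕ, m = (2 * b - 1) * k + 2} := by
  subst hS
  ext m
  constructor
  · rintro ⟨x, hx, y, hy, rfl⟩
    obtain ⟨n1, rfl⟩ := hx
    obtain ⟨n2, rfl⟩ := hy
    exact ⟨Nat.ofDigits (2 * b - 1) (Nat.digits b n1) +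
      Nat.ofDigits (2 * b - 1) (Nat.digits b n2), by ring⟩
  · rintro ⟨k, rfl⟩
    obtain ⟨n1, n2, hn⟩ := split b hb k
    exact ⟨(2 * b - 1) * Nat.ofDigits (2 * b - 1) (Nat.digits b n1) + 1, ⟨n1, rfl⟩,
      (2 * b - 1) * Nat.ofDigits (2 * b - 1) (Nat.digits b n2) + 1, ⟨n2, rfl⟩,
      by rw [← hn]; ring⟩
end

section
/- Every natural number m of the form (2b-1)n + 2 lies in S + S, where S = {(2b-1)·[(n)_b]_{2b-1} + 1 : n ∈ ℕ}. Specifically, if n has base-(2b-1) digits a_k ⋯ a_1 with each a_i ≤ 2b-2, one can write each a_i = b_i + d_i with b_i, d_i ∈ {0,...,b-1}, and then (2b-1)n + 2 = S_{[b_k⋯b_1]_b} + S_{[d_k⋯d_1]_b}. -/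
private lemma ofDigits_zero_of_ofDigits_zero (b c : ℕ) (hb : 0 < b) :
    ∀ L : List ℕ, Nat.ofDigits b L = 0 → Nat.ofDigits c L = 0 := by
  intro L
  induction L with
  | nil => simp
  | cons a L ih =>
    simp only [Nat.ofDigits_cons]
    intro h
    have ha : a = 0 := by omega
    have hm : b * Nat.ofDigits b L = 0 := by omega
    have : Nat.ofDigits b L = 0 := by
      rcases Nat.mul_eq_zero.mp hm with h | h
      · omega
      · exact h
    rw [ha, ih this]; ring

private lemma ofDigits_digits_ofDigits (b c : ℕ) (hb : 2 ≤ b) :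
    ∀ L : List ℕ, (∀ x ∈ L, x < b) →
      Nat.ofDigits c (Nat.digits b (Nat.ofDigits b L)) = Nat.ofDigits c L := by
  intro L
  induction L with
  | nil => simp
  | cons a L ih =>
    intro hall
    have ha : a < b := hall a (by simp)
    have hL : ∀ x ∈ L, x < b := fun x hx => hall x (by simp [hx])
    simp only [Nat.ofDigits_cons]
    by_cases h0 : a + b * Nat.ofDigits b L = 0
    · have ha0 : a = 0 := by omega
      have hm : b * Nat.ofDigits b L = 0 := by omega
      have hLz : Nat.ofDigits b L = 0 := by
        rcases Nat.mul_eq_zero.mp hm with h | h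
        · omega
        · exact h
      have : Nat.ofDigits c L = 0 :=
        ofDigits_zero_of_ofDigits_zero b c (by omega) L hLz
      simp [ha0, hLz, this]
    · push_cast
      rw [Nat.digits_def' (by omega : 1 < b) (Nat.pos_of_ne_zero h0)]
      have hmod : (a + b * Nat.ofDigits b L) % b = a := by
        rw [Nat.add_mul_mod_self_left, Nat.mod_eq_of_lt ha]
      have hdiv : (a + b * Nat.ofDigits b L) / b = Nat.ofDigits b L := by
        rw [Nat.add_mul_div_left _ _ (by omega : 0 < b), Nat.div_eq_of_lt ha]
        omega
      rw [hmod, hdiv, Nat.ofDigits_cons, ih hL]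

private lemma zipWith_add_map (f g : ℕ → ℕ) :
    ∀ L : List ℕ, List.zipWith (· + ·) (L.map f) (L.map g) = L.map (fun a => f a + g a) := by
  intro L
  induction L with
  | nil => rfl
  | cons a L ih => simp [ih]

private lemma ofDigits_map_add (c : ℕ) (f g : ℕ → ℕ) :
    ∀ L : List ℕ, Nat.ofDigits c (L.map f) + Nat.ofDigits c (L.map g)
      = Nat.ofDigits c (L.map (fun a => f a + g a)) := by
  intro L
  induction L with
  | nil => simp
  | cons a L ih =>
    simp only [List.map_cons, Nat.ofDigits_cons]
    push_cast
    rw [← ih]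
    ring

/-- every (2b-1)n+2 lies in S+S, via a digitwise splitting of the
    base-(2b-1) digits of n into two base-b digit strings. -/
theorem stmt2 (b : ℕ) (hb : 2 ≤ b) (n : ℕ) :
    ∃ bs ds : List ℕ,
      (∀ x ∈ bs, x < b) ∧ (∀ x ∈ ds, x < b) ∧
      bs.length = (Nat.digits (2 * b - 1) n).length ∧
      ds.length = (Nat.digits (2 * b - 1) n).length ∧
      List.zipWith (· + ·) bs ds = Nat.digits (2 * b - 1) n ∧
      (2 * b - 1) * n + 2 =
        ((2 * b - 1) * Nat.ofDigits (2 * b - 1) (Nat.digits b (Nat.ofDigits b bs)) + 1) +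
        ((2 * b - 1) * Nat.ofDigits (2 * b - 1) (Nat.digits b (Nat.ofDigits b ds)) + 1) := by
  set B := 2 * b - 1 with hB
  have hB2 : 2 ≤ B := by omega
  set L := Nat.digits B n with hL
  have hdig : ∀ x ∈ L, x < B := fun x hx => Nat.digits_lt_base (by omega) hx
  set f : ℕ → ℕ := fun a => min a (b - 1) with hf
  set g : ℕ → ℕ := fun a => a - (b - 1) with hg
  refine ⟨L.map f, L.map g, ?_, ?_, by simp, by simp, ?_, ?_⟩
  · intro x hx
    obtain ⟨a, _, rfl⟩ := List.mem_map.mp hx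
    simp only [hf]; omega
  · intro x hx
    obtain ⟨a, ha, rfl⟩ := List.mem_map.mp hx
    have := hdig a ha
    simp only [hg]; omega
  · rw [zipWith_add_map]
    conv_rhs => rw [← List.map_id L]
    apply List.map_congr_left
    intro a ha
    have := hdig a ha
    simp only [hf, hg, id]; omega
  · have hfb : ∀ x ∈ L.map f, x < b := by
      intro x hx
      obtain ⟨a, _, rfl⟩ := List.mem_map.mp hx
      simp only [hf]; omega
    have hgb : ∀ x ∈ L.map g, x < b := by
      intro x hx
      obtain ⟨a, ha, rfl⟩ := List.mem_map.mp hx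
      have := hdig a ha
      simp only [hg]; omega
    rw [ofDigits_digits_ofDigits b B hb _ hfb, ofDigits_digits_ofDigits b B hb _ hgb]
    have hsum : Nat.ofDigits B (L.map f) + Nat.ofDigits B (L.map g)
        = Nat.ofDigits B (L.map (fun a => f a + g a)) := ofDigits_map_add B f g L
    have hid : L.map (fun a => f a + g a) = L := by
      conv_rhs => rw [← List.map_id L]
      apply List.map_congr_left
      intro a ha
      have := hdig a ha
      simp only [hf, hg, id]; omega
    have hn : Nat.ofDigits B (L.map f) + Nat.ofDigits B (L.map g) = n := by
      rw [hsum, hid, hL, Nat.ofDigits_digits]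
    rw [← hn, Nat.mul_add]
    ring
end

section
/- For the Cantor-like substitution σ with σ(1) = 1 0^{l_1} 1 0^{l_2} and σ(0) = 0^{l_3}, if μ_n denotes the number of 0's between the n-th and (n+1)-th occurrence of 1 in the fixed point σ^∞(1), then for all n ≥ 1 written as n = 2^k(2j+1), one has μ_n = l_2·(l_3^k − 1)/(l_3 − 1) + l_1·l_3^k. -/
/-- The Cantor-like substitution σ : 1 ↦ 1 0^{l₁} 1 0^{l₂}, 0 ↦ 0^{l₃}. -/
def cantorSub (l1 l2 l3 : ℕ) : ℕ → List ℕ :=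
  fun a => if a = 1 then 1 :: (List.replicate l1 0 ++ 1 :: List.replicate l2 0)
           else List.replicate l3 0

/-- σ^m(1). -/
def cantorWord (l1 l2 l3 : ℕ) (m : ℕ) : List ℕ :=
  (fun w => w.flatMap (cantorSub l1 l2 l3))^[m] [1]

/-- The fixed point c = σ^∞(1): since σ^m(1) is a prefix of σ^{m+1}(1) and
    |σ^{n+1}(1)| > n, the n-th letter of c is the n-th letter of σ^{n+1}(1). -/
def cantorSeq (l1 l2 l3 : ℕ) (n : ℕ) : ℕ :=
  (cantorWord l1 l2 l3 (n + 1)).getD n 0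

/-!
Cut the fixed point into blocks `1 0^{μ_n}`. Since σ(1 0^r) = 1 0^{l₁} 1 0^{l₂ + l₃ r}, the
substitution sends the `n`-th block to the blocks `2n - 1` and `2n`, so μ_{2n-1} = l₁ and
μ_{2n} = l₂ + l₃ μ_n. Unwinding this recursion `k` times from n = 2^k(2j+1) gives the formula.
That the fixed point really is this concatenation of blocks follows because σ^m maps the
first block `1 0^{l₁}` to the first `2^m` blocks, while σ^{m+1}(1) = σ^m(1 0^{l₁}) σ^m(1 0^{l₂}).
-/

theorem Nat.nth_eq_of_strictMono {p : ℕ → Prop} {f : ℕ → ℕ} (hf : StrictMono f)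
    (hp : ∀ k, p k ↔ k ∈ Set.range f) (n : ℕ) : Nat.nth p n = f n := by
  have hinf : (Set.ofPred p).Infinite :=
    Set.infinite_of_injective_forall_mem hf.injective fun k => (hp (f k)).2 ⟨k, rfl⟩
  have hpf : (fun i => p (f i)) = fun _ => True := funext fun i => eq_true ((hp _).2 ⟨i, rfl⟩)
  have := Nat.nth_comp_of_strictMono hf (fun k => (hp k).1) (n := n) fun h => (hinf h).elim
  rwa [hpf, Nat.nth_true, eq_comm] at this

section

variable {l1 l2 l3 : ℕ}

/-- `μ_n` for `n ≥ 1`. -/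
def cantorGap (l1 l2 l3 : ℕ) : ℕ → ℕ
  | 0 => 0
  | m + 1 => if m % 2 = 0 then l1 else l2 + l3 * cantorGap l1 l2 l3 ((m + 1) / 2)
  decreasing_by omega

theorem cantorGap_two_mul_add_one (n : ℕ) : cantorGap l1 l2 l3 (2 * n + 1) = l1 := by
  rw [cantorGap]; simp

theorem cantorGap_two_mul_add_two (n : ℕ) :
    cantorGap l1 l2 l3 (2 * n + 2) = l2 + l3 * cantorGap l1 l2 l3 (n + 1) := by
  rw [cantorGap, if_neg (by omega), show (2 * n + 1 + 1) / 2 = n + 1 by omega]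

theorem cantorGap_two_pow_mul_odd (k j : ℕ) :
    cantorGap l1 l2 l3 (2 ^ k * (2 * j + 1))
      = l2 * (∑ i ∈ Finset.range k, l3 ^ i) + l1 * l3 ^ k := by
  induction k with
  | zero => simp [cantorGap_two_mul_add_one]
  | succ k ih =>
    have hpos : 0 < 2 ^ k * (2 * j + 1) := by positivity
    rw [show 2 ^ (k + 1) * (2 * j + 1) = 2 * (2 ^ k * (2 * j + 1) - 1) + 2 by
          rw [pow_succ, mul_comm (2 ^ k) 2, mul_assoc]; omega,
      cantorGap_two_mul_add_two, Nat.sub_add_cancel hpos, ih, geom_sum_succ]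
    ring

/-- The `(n+1)`-th `1` of the fixed point together with the zeros that follow it. -/
def cantorBlock (l1 l2 l3 : ℕ) (n : ℕ) : List ℕ :=
  1 :: List.replicate (cantorGap l1 l2 l3 (n + 1)) 0

def cantorBlocks (l1 l2 l3 : ℕ) (n : ℕ) : List ℕ :=
  (List.range n).flatMap (cantorBlock l1 l2 l3)

/-- The position of the `(n+1)`-th `1` in the fixed point. -/
def cantorPos (l1 l2 l3 : ℕ) (n : ℕ) : ℕ :=
  (cantorBlocks l1 l2 l3 n).length

theorem cantorBlocks_succ (n : ℕ) :
    cantorBlocks l1 l2 l3 (n + 1) = cantorBlocks l1 l2 l3 n ++ cantorBlock l1 l2 l3 n := by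
  simp [cantorBlocks, List.range_succ]

theorem cantorPos_succ (n : ℕ) :
    cantorPos l1 l2 l3 (n + 1) = cantorPos l1 l2 l3 n + cantorGap l1 l2 l3 (n + 1) + 1 := by
  simp only [cantorPos, cantorBlocks_succ, cantorBlock, List.length_append, List.length_cons,
    List.length_replicate]
  omega

theorem cantorPos_strictMono : StrictMono (cantorPos l1 l2 l3) :=
  strictMono_nat_of_lt_succ fun n => by rw [cantorPos_succ]; omega

theorem getD_cantorBlocks {i n : ℕ} (hi : i < cantorPos l1 l2 l3 n) :
    (cantorBlocks l1 l2 l3 n).getD i 0 =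
      (Set.range (cantorPos l1 l2 l3)).indicator 1 i := by
  induction n with
  | zero => simp [cantorPos, cantorBlocks] at hi
  | succ n ih =>
    rw [cantorBlocks_succ]
    rcases lt_or_ge i (cantorPos l1 l2 l3 n) with hlt | hge
    · rw [List.getD_append _ _ _ _ hlt, ih hlt]
    rw [List.getD_append_right _ _ _ _ hge]
    rcases hge.eq_or_lt with rfl | hgt
    · simp [cantorBlock, cantorPos]
    · have hnot : i ∉ Set.range (cantorPos l1 l2 l3) := by
        rintro ⟨m, rfl⟩
        have h1 := cantorPos_strictMono.lt_iff_lt.1 hgt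
        have h2 := cantorPos_strictMono.lt_iff_lt.1 hi
        omega
      rw [Set.indicator_of_notMem hnot]
      change (cantorBlock l1 l2 l3 n).getD (i - cantorPos l1 l2 l3 n) 0 = 0
      rw [show i - cantorPos l1 l2 l3 n = (i - cantorPos l1 l2 l3 n - 1) + 1 by omega]
      simp [cantorBlock, List.getD_eq_getElem?_getD]

def cantorSubst (l1 l2 l3 : ℕ) (w : List ℕ) : List ℕ :=
  w.flatMap (cantorSub l1 l2 l3)

theorem iterate_cantorSubst_append (m : ℕ) (u v : List ℕ) :
    (cantorSubst l1 l2 l3)^[m] (u ++ v)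
      = (cantorSubst l1 l2 l3)^[m] u ++ (cantorSubst l1 l2 l3)^[m] v := by
  induction m generalizing u v with
  | zero => rfl
  | succ m ih => simp only [Function.iterate_succ_apply, cantorSubst, List.flatMap_append, ih]

theorem cantorSubst_replicate_zero (r : ℕ) :
    cantorSubst l1 l2 l3 (List.replicate r 0) = List.replicate (l3 * r) 0 := by
  induction r with
  | zero => rfl
  | succ r ih =>
    rw [List.replicate_succ, cantorSubst, List.flatMap_cons, ← cantorSubst, ih, Nat.mul_succ,
      add_comm, List.replicate_add]
    rfl

theorem cantorSubst_cantorBlock (n : ℕ) :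
    cantorSubst l1 l2 l3 (cantorBlock l1 l2 l3 n)
      = cantorBlock l1 l2 l3 (2 * n) ++ cantorBlock l1 l2 l3 (2 * n + 1) := by
  rw [cantorBlock, cantorSubst, List.flatMap_cons, ← cantorSubst, cantorSubst_replicate_zero,
    cantorBlock, cantorBlock, cantorGap_two_mul_add_one, cantorGap_two_mul_add_two,
    List.replicate_add]
  simp [cantorSub]

theorem cantorSubst_cantorBlocks (n : ℕ) :
    cantorSubst l1 l2 l3 (cantorBlocks l1 l2 l3 n) = cantorBlocks l1 l2 l3 (2 * n) := by
  induction n with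
  | zero => rfl
  | succ n ih =>
    rw [cantorBlocks_succ, cantorSubst, List.flatMap_append, ← cantorSubst, ih, ← cantorSubst,
      cantorSubst_cantorBlock, Nat.mul_succ, cantorBlocks_succ, cantorBlocks_succ,
      List.append_assoc]

theorem iterate_cantorSubst_cantorBlocks_one (m : ℕ) :
    (cantorSubst l1 l2 l3)^[m] (cantorBlocks l1 l2 l3 1) = cantorBlocks l1 l2 l3 (2 ^ m) := by
  induction m with
  | zero => rfl
  | succ m ih => rw [Function.iterate_succ_apply', ih, cantorSubst_cantorBlocks, pow_succ, mul_comm]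

theorem cantorWord_succ (m : ℕ) :
    cantorWord l1 l2 l3 (m + 1)
      = cantorBlocks l1 l2 l3 (2 ^ m)
        ++ (cantorSubst l1 l2 l3)^[m] (1 :: List.replicate l2 0) := by
  have hσ : cantorSubst l1 l2 l3 [1] = cantorBlocks l1 l2 l3 1 ++ 1 :: List.replicate l2 0 := by
    simp [cantorSubst, cantorSub, cantorBlocks, cantorBlock, cantorGap_two_mul_add_one 0]
  rw [cantorWord, Function.iterate_succ_apply]
  change (cantorSubst l1 l2 l3)^[m] (cantorSubst l1 l2 l3 [1]) = _
  rw [hσ, iterate_cantorSubst_append, iterate_cantorSubst_cantorBlocks_one]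

theorem cantorSeq_eq_indicator (i : ℕ) :
    cantorSeq l1 l2 l3 i = (Set.range (cantorPos l1 l2 l3)).indicator 1 i := by
  have hi : i < cantorPos l1 l2 l3 (2 ^ i) :=
    i.lt_two_pow_self.trans_le (cantorPos_strictMono.id_le _)
  rw [cantorSeq, cantorWord_succ, List.getD_append _ _ _ _ hi, getD_cantorBlocks hi]

theorem nth_cantorSeq_eq_one (n : ℕ) :
    Nat.nth (fun i => cantorSeq l1 l2 l3 i = 1) n = cantorPos l1 l2 l3 n := by
  refine Nat.nth_eq_of_strictMono cantorPos_strictMono (fun i => ?_) n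
  by_cases h : i ∈ Set.range (cantorPos l1 l2 l3) <;> simp [cantorSeq_eq_indicator, h]

theorem cantorSeq_eq_zero_of_mem_Ioo {i n : ℕ}
    (hi : i ∈ Finset.Ioo (cantorPos l1 l2 l3 n) (cantorPos l1 l2 l3 (n + 1))) :
    cantorSeq l1 l2 l3 i = 0 := by
  rw [cantorSeq_eq_indicator, Set.indicator_of_notMem]
  rintro ⟨m, rfl⟩
  rw [Finset.mem_Ioo, cantorPos_strictMono.lt_iff_lt, cantorPos_strictMono.lt_iff_lt] at hi
  omega

end

theorem stmt3_general (l1 l2 l3 : ℕ) (k j : ℕ) :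
    ((Finset.Ioo
        (Nat.nth (fun i => cantorSeq l1 l2 l3 i = 1) (2 ^ k * (2 * j + 1) - 1))
        (Nat.nth (fun i => cantorSeq l1 l2 l3 i = 1) (2 ^ k * (2 * j + 1)))).filter
        (fun i => cantorSeq l1 l2 l3 i = 0)).card
      = l2 * (∑ i ∈ Finset.range k, l3 ^ i) + l1 * l3 ^ k := by
  obtain ⟨n, hn⟩ : ∃ n, 2 ^ k * (2 * j + 1) = n + 1 := Nat.exists_eq_add_one.2 (by positivity)
  rw [hn, Nat.add_sub_cancel, nth_cantorSeq_eq_one, nth_cantorSeq_eq_one,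
    Finset.filter_true_of_mem fun i hi => cantorSeq_eq_zero_of_mem_Ioo hi, Nat.card_Ioo,
    cantorPos_succ, ← hn, cantorGap_two_pow_mul_odd]
  omega

/-- for n = 2^k(2j+1) ≥ 1, the number of 0's strictly between the
    n-th and (n+1)-th occurrence of `1` in σ^∞(1) equals
    l₂(l₃^k − 1)/(l₃ − 1) + l₁ l₃^k = l₂ · ∑_{i<k} l₃^i + l₁ l₃^k. -/
theorem stmt3 (l1 l2 l3 : ℕ) (hl3 : 3 ≤ l3) (k j : ℕ) :
    ((Finset.Ioo
        (Nat.nth (fun i => cantorSeq l1 l2 l3 i = 1) (2 ^ k * (2 * j + 1) - 1))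
        (Nat.nth (fun i => cantorSeq l1 l2 l3 i = 1) (2 ^ k * (2 * j + 1)))).filter
        (fun i => cantorSeq l1 l2 l3 i = 0)).card
      = l2 * (∑ i ∈ Finset.range k, l3 ^ i) + l1 * l3 ^ k :=
  stmt3_general l1 l2 l3 k j
end

section
/- For the gap sequence (μ_n) of a Cantor-like sequence, the partial sums satisfy l_3·Σ_{i=1}^{2^{m-1}−1} μ_i = Σ_{i=1}^{2^m−1} μ_i − 2^{m-1}(l_1 + l_2) + l_2 for all m ≥ 1. -/
/-! Pairing the terms `μ (2n) = l₃ μ n + l₂` and `μ (2n+1) = l₁` shows that the sum of `μ` up to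
`2N + 1` is `l₃` times the sum up to `N`, plus `N l₂ + (N + 1) l₁`; take `N + 1 = 2 ^ (m - 1)`. -/

lemma sum_Icc_one_two_mul_add_one_eq (l1 l2 l3 : ℕ) (μ : ℕ → ℕ)
    (h1 : μ 1 = l1)
    (h2 : ∀ n : ℕ, 1 ≤ n → μ (2 * n) = l3 * μ n + l2)
    (h3 : ∀ n : ℕ, 1 ≤ n → μ (2 * n + 1) = l1) (N : ℕ) :
    ∑ i ∈ Finset.Icc 1 (2 * N + 1), μ i
      = l3 * ∑ i ∈ Finset.Icc 1 N, μ i + N * l2 + (N + 1) * l1 := by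
  induction N with
  | zero => simp [h1]
  | succ N ih =>
    rw [Finset.sum_Icc_succ_top (show 1 ≤ 2 * (N + 1) + 1 by omega),
      show 2 * (N + 1) = 2 * N + 1 + 1 by ring,
      Finset.sum_Icc_succ_top (show 1 ≤ 2 * N + 1 + 1 by omega), ih,
      Finset.sum_Icc_succ_top (show 1 ≤ N + 1 by omega),
      show 2 * N + 1 + 1 = 2 * (N + 1) by ring, h2 (N + 1) (by omega), h3 (N + 1) (by omega)]
    ring

theorem stmt5_general (l1 l2 l3 : ℕ) (μ : ℕ → ℕ)
    (h1 : μ 1 = l1)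
    (h2 : ∀ n : ℕ, 1 ≤ n → μ (2 * n) = l3 * μ n + l2)
    (h3 : ∀ n : ℕ, 1 ≤ n → μ (2 * n + 1) = l1) :
    ∀ m : ℕ, 1 ≤ m →
      l3 * (∑ i ∈ Finset.Icc 1 (2 ^ (m - 1) - 1), μ i) + 2 ^ (m - 1) * (l1 + l2)
        = (∑ i ∈ Finset.Icc 1 (2 ^ m - 1), μ i) + l2 := by
  intro m hm
  obtain ⟨N, hN⟩ : ∃ N, 2 ^ (m - 1) = N + 1 := ⟨_, (Nat.succ_pred_eq_of_pos (by positivity)).symm⟩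
  have h2m : 2 ^ m - 1 = 2 * N + 1 := by
    rw [← Nat.succ_pred_eq_of_pos hm, pow_succ, Nat.pred_eq_sub_one, hN]
    omega
  rw [hN, h2m, Nat.add_sub_cancel, sum_Icc_one_two_mul_add_one_eq l1 l2 l3 μ h1 h2 h3 N]
  ring

/-- l₃ · ∑_{i=1}^{2^{m-1}−1} μ_i
      = ∑_{i=1}^{2^m−1} μ_i − 2^{m-1}(l₁+l₂) + l₂ for all m ≥ 1
    (stated additively to avoid truncated subtraction). -/
theorem stmt5 (l1 l2 l3 : ℕ) (hl3 : 3 ≤ l3) (μ : ℕ → ℕ)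
    (h1 : μ 1 = l1)
    (h2 : ∀ n : ℕ, 1 ≤ n → μ (2 * n) = l3 * μ n + l2)
    (h3 : ∀ n : ℕ, 1 ≤ n → μ (2 * n + 1) = l1) :
    ∀ m : ℕ, 1 ≤ m →
      l3 * (∑ i ∈ Finset.Icc 1 (2 ^ (m - 1) - 1), μ i) + 2 ^ (m - 1) * (l1 + l2)
        = (∑ i ∈ Finset.Icc 1 (2 ^ m - 1), μ i) + l2 :=
  stmt5_general l1 l2 l3 μ h1 h2 h3
end

section
/- For the gap sequence (μ_n) of a Cantor-like sequence, the closed form Σ_{i=1}^{2^n − 1} μ_i = (l_1+l_2)/(l_3−2)·(l_3^n − 2^n) − l_2·(l_3^n − 1)/(l_3 − 1) holds for all n ≥ 1 (with l_3 ≥ 3 so the denominators are nonzero). -/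
/-!
Write `S n = ∑_{i=1}^{2^n-1} μ i`. Pairing the index `2k` with `2k+1` gives
`S (n+1) + l₂ = l₃ S n + (l₁ + l₂) 2^n`, so `T n = S n + l₂ (1 + l₃ + ⋯ + l₃^(n-1))` satisfies the
recurrence `T (n+1) = l₃ T n + (l₁ + l₂) 2^n`, `T 0 = 0`, whose solution is
`(l₁ + l₂) ∑_{i<n} l₃^i 2^(n-1-i)`.
-/

open Finset

lemma Finset.sum_Icc_one_two_mul_add_one {M : Type*} [AddCommMonoid M] (f : ℕ → M) (m : ℕ) :
    ∑ i ∈ Icc 1 (2 * m + 1), f i = f 1 + ∑ k ∈ Icc 1 m, (f (2 * k) + f (2 * k + 1)) := by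
  induction m with
  | zero => simp
  | succ m ih =>
    rw [show 2 * (m + 1) + 1 = 2 * m + 1 + 1 + 1 by ring, sum_Icc_succ_top (by omega),
      sum_Icc_succ_top (by omega), ih, sum_Icc_succ_top (by omega : 1 ≤ m + 1),
      show 2 * m + 1 + 1 = 2 * (m + 1) by ring, add_assoc, add_assoc]

lemma geom_sum₂_succ_eq_mul_add {R : Type*} [CommSemiring R] (x y : R) (n : ℕ) :
    ∑ i ∈ range (n + 1), x ^ i * y ^ (n - i)
      = x * ∑ i ∈ range n, x ^ i * y ^ (n - 1 - i) + y ^ n := by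
  rw [sum_range_succ', mul_sum]
  congr 1
  · refine sum_congr rfl fun i _ => ?_
    rw [show n - (i + 1) = n - 1 - i by omega, pow_succ]
    ring
  · simp

lemma sum_Icc_two_pow_succ_add {l1 l2 l3 : ℕ} {μ : ℕ → ℕ} (h1 : μ 1 = l1)
    (h2 : ∀ n : ℕ, 1 ≤ n → μ (2 * n) = l3 * μ n + l2)
    (h3 : ∀ n : ℕ, 1 ≤ n → μ (2 * n + 1) = l1) (n : ℕ) :
    ∑ i ∈ Icc 1 (2 ^ (n + 1) - 1), μ i + l2
      = l3 * ∑ i ∈ Icc 1 (2 ^ n - 1), μ i + (l1 + l2) * 2 ^ n := by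
  have hpos : 1 ≤ 2 ^ n := Nat.one_le_two_pow
  have hpair : ∀ k ∈ Icc 1 (2 ^ n - 1), μ (2 * k) + μ (2 * k + 1) = l3 * μ k + (l1 + l2) :=
    fun k hk => by
      rw [h2 k (mem_Icc.1 hk).1, h3 k (mem_Icc.1 hk).1]
      ring
  rw [show 2 ^ (n + 1) - 1 = 2 * (2 ^ n - 1) + 1 by omega, sum_Icc_one_two_mul_add_one,
    sum_congr rfl hpair, sum_add_distrib, ← mul_sum, sum_const, Nat.card_Icc, smul_eq_mul, h1,
    Nat.add_sub_cancel]
  obtain ⟨m, hm⟩ : ∃ m, 2 ^ n = m + 1 := ⟨2 ^ n - 1, by omega⟩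
  rw [hm, Nat.add_sub_cancel]
  ring

theorem stmt6_general (l1 l2 l3 : ℕ) (μ : ℕ → ℕ)
    (h1 : μ 1 = l1)
    (h2 : ∀ n : ℕ, 1 ≤ n → μ (2 * n) = l3 * μ n + l2)
    (h3 : ∀ n : ℕ, 1 ≤ n → μ (2 * n + 1) = l1) :
    ∀ n : ℕ, 1 ≤ n →
      (∑ i ∈ Finset.Icc 1 (2 ^ n - 1), μ i) + l2 * (∑ i ∈ Finset.range n, l3 ^ i)
        = (l1 + l2) * (∑ i ∈ Finset.range n, l3 ^ i * 2 ^ (n - 1 - i)) := by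
  rintro n -
  induction n with
  | zero => simp
  | succ n ih =>
    calc ∑ i ∈ Icc 1 (2 ^ (n + 1) - 1), μ i + l2 * ∑ i ∈ range (n + 1), l3 ^ i
        = (∑ i ∈ Icc 1 (2 ^ (n + 1) - 1), μ i + l2) + l3 * (l2 * ∑ i ∈ range n, l3 ^ i) := by
          rw [geom_sum_succ]
          ring
      _ = l3 * (∑ i ∈ Icc 1 (2 ^ n - 1), μ i + l2 * ∑ i ∈ range n, l3 ^ i)
            + (l1 + l2) * 2 ^ n := by
          rw [sum_Icc_two_pow_succ_add h1 h2 h3]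
          ring
      _ = (l1 + l2) * ∑ i ∈ range (n + 1), l3 ^ i * 2 ^ (n + 1 - 1 - i) := by
          rw [ih, Nat.add_sub_cancel, geom_sum₂_succ_eq_mul_add]
          ring

/-- ∑_{i=1}^{2^n−1} μ_i
      = (l₁+l₂)(l₃^n − 2^n)/(l₃−2) − l₂(l₃^n − 1)/(l₃−1) for all n ≥ 1,
    stated additively with (l₃^n − 2^n)/(l₃−2) = ∑_{i<n} l₃^i 2^{n-1-i} and
    (l₃^n − 1)/(l₃−1) = ∑_{i<n} l₃^i. -/
theorem stmt6 (l1 l2 l3 : ℕ) (hl3 : 3 ≤ l3) (μ : ℕ → ℕ)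
    (h1 : μ 1 = l1)
    (h2 : ∀ n : ℕ, 1 ≤ n → μ (2 * n) = l3 * μ n + l2)
    (h3 : ∀ n : ℕ, 1 ≤ n → μ (2 * n + 1) = l1) :
    ∀ n : ℕ, 1 ≤ n →
      (∑ i ∈ Finset.Icc 1 (2 ^ n - 1), μ i) + l2 * (∑ i ∈ Finset.range n, l3 ^ i)
        = (l1 + l2) * (∑ i ∈ Finset.range n, l3 ^ i * 2 ^ (n - 1 - i)) :=
  stmt6_general l1 l2 l3 μ h1 h2 h3
end

section
/- If 7 l_3 ≥ 4(l_1 + l_2) + 17 and l_1(l_3 − 1) + l_2 > 3, then the gap sequence (μ_n) of the Cantor-like sequence satisfies μ_{2^m} > Σ_{i=1}^{2^m − 1} μ_i + 2^m + (3^m − 1)/2 for all m ≥ 1. -/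
/-!
Write `S k = ∑_{1 ≤ i ≤ k} μ i` and `p = 2^m`. Since `μ (2n) = l₃ μ n + l₂` and `μ (2n+1) = l₁`,
the odd partial sums satisfy `S (2k+1) = l₃ S k + μ 1 + k (l₁ + l₂)`, so passing from `m` to
`m + 1` multiplies both `S (p - 1)` and `μ p` by `l₃` up to terms linear in `p`. The inductive
hypothesis then leaves a margin `l₃ (p + t + 1)` with `t = (3^m - 1)/2`, which absorbs the new
linear terms because `3 p ≤ 4 t + 2` and `7 l₃ ≥ 4 (l₁ + l₂) + 17`.
-/

theorem sum_Icc_one_two_mul_add_one {l1 l2 l3 : ℕ} {μ : ℕ → ℕ}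
    (h2 : ∀ n : ℕ, 1 ≤ n → μ (2 * n) = l3 * μ n + l2)
    (h3 : ∀ n : ℕ, 1 ≤ n → μ (2 * n + 1) = l1) (k : ℕ) :
    ∑ i ∈ Finset.Icc 1 (2 * k + 1), μ i
      = l3 * ∑ i ∈ Finset.Icc 1 k, μ i + μ 1 + k * (l1 + l2) := by
  induction k with
  | zero => simp
  | succ k ih =>
    rw [Finset.sum_Icc_succ_top (a := 1) (b := 2 * (k + 1)) (by omega),
      show 2 * (k + 1) = 2 * k + 1 + 1 by ring,
      Finset.sum_Icc_succ_top (a := 1) (b := 2 * k + 1) (by omega), ih,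
      Finset.sum_Icc_succ_top (a := 1) (b := k) (by omega),
      show 2 * k + 1 + 1 = 2 * (k + 1) by ring, h2 _ k.succ_pos, h3 _ k.succ_pos]
    ring

theorem two_mul_geom_sum_three_add_one (m : ℕ) :
    2 * ∑ i ∈ Finset.range m, 3 ^ i + 1 = 3 ^ m := by
  have := geom_sum_mul_add 2 m
  norm_num at this
  omega

theorem three_mul_two_pow_le_two_mul_three_pow {m : ℕ} (hm : 1 ≤ m) :
    3 * 2 ^ m ≤ 2 * 3 ^ m := by
  obtain ⟨n, rfl⟩ : ∃ n, m = n + 1 := ⟨m - 1, by omega⟩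
  have : 2 ^ n ≤ 3 ^ n := Nat.pow_le_pow_left (by norm_num) n
  rw [pow_succ, pow_succ]
  omega

theorem gap_step {l1 l2 l3 A B k t : ℕ} (hc1 : 4 * (l1 + l2) + 17 ≤ 7 * l3)
    (hkt : 3 * (k + 1) ≤ 4 * t + 2) (ih : A + (k + 1) + t < B) :
    l3 * A + l1 + k * (l1 + l2) + 2 * (k + 1) + (t + (2 * t + 1)) < l3 * B + l2 := by
  have hl3 : 3 ≤ l3 := by omega
  nlinarith [Nat.mul_le_mul_left l3 ih, Nat.mul_le_mul_left k hc1]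

theorem stmt7_general (l1 l2 l3 : ℕ)
    (hc1 : 4 * (l1 + l2) + 17 ≤ 7 * l3)
    (hc2 : 3 < l1 * (l3 - 1) + l2)
    (μ : ℕ → ℕ)
    (h1 : μ 1 = l1)
    (h2 : ∀ n : ℕ, 1 ≤ n → μ (2 * n) = l3 * μ n + l2)
    (h3 : ∀ n : ℕ, 1 ≤ n → μ (2 * n + 1) = l1) :
    ∀ m : ℕ, 1 ≤ m →
      (∑ i ∈ Finset.Icc 1 (2 ^ m - 1), μ i) + 2 ^ m + (∑ i ∈ Finset.range m, 3 ^ i)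
        < μ (2 ^ m) := by
  refine Nat.le_induction ?_ fun m hm ih => ?_
  · obtain ⟨c, rfl⟩ : ∃ c, l3 = c + 1 := ⟨l3 - 1, by omega⟩
    have hμ2 : μ 2 = (c + 1) * l1 + l2 := by simpa [h1] using h2 1 le_rfl
    simp only [pow_one, Nat.add_one_sub_one, Finset.Icc_self, Finset.sum_singleton, h1,
      Finset.range_one, hμ2] at hc2 ⊢
    nlinarith
  · obtain ⟨k, hk⟩ : ∃ k, 2 ^ m = k + 1 := ⟨2 ^ m - 1, by have := Nat.one_le_two_pow (n := m); omega⟩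
    have hpow : 2 ^ (m + 1) = 2 * (k + 1) := by rw [pow_succ, hk, mul_comm]
    have hgeom := two_mul_geom_sum_three_add_one m
    have hkt : 3 * (k + 1) ≤ 4 * ∑ i ∈ Finset.range m, 3 ^ i + 2 := by
      have := three_mul_two_pow_le_two_mul_three_pow hm
      omega
    rw [hk, Nat.add_sub_cancel] at ih
    rw [hpow, show 2 * (k + 1) - 1 = 2 * k + 1 by omega, sum_Icc_one_two_mul_add_one h2 h3, h1,
      h2 _ k.succ_pos, Finset.sum_range_succ, ← hgeom]
    exact gap_step hc1 hkt ih

/-- if 7l₃ ≥ 4(l₁+l₂)+17 and l₁(l₃−1)+l₂ > 3, then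
    μ_{2^m} > ∑_{i=1}^{2^m−1} μ_i + 2^m + (3^m − 1)/2 for all m ≥ 1,
    where (3^m − 1)/2 = ∑_{i<m} 3^i. -/
theorem stmt7 (l1 l2 l3 : ℕ) (hl3 : 3 ≤ l3)
    (hc1 : 4 * (l1 + l2) + 17 ≤ 7 * l3)
    (hc2 : 3 < l1 * (l3 - 1) + l2)
    (μ : ℕ → ℕ)
    (h1 : μ 1 = l1)
    (h2 : ∀ n : ℕ, 1 ≤ n → μ (2 * n) = l3 * μ n + l2)
    (h3 : ∀ n : ℕ, 1 ≤ n → μ (2 * n + 1) = l1) :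
    ∀ m : ℕ, 1 ≤ m →
      (∑ i ∈ Finset.Icc 1 (2 ^ m - 1), μ i) + 2 ^ m + (∑ i ∈ Finset.range m, 3 ^ i)
        < μ (2 ^ m) :=
  stmt7_general l1 l2 l3 hc1 hc2 μ h1 h2 h3
end

section
/- If the sequence (α_n)_{n≥1} is defined by α_n = (3^k + 1)/2 whenever n = 2^k(2j+1), then Σ_{i=1}^{2^m − 1} α_i = (3^m − 1)/2 for all m ≥ 1. -/
/-!
Adding `2 ^ m` to some `0 < i < 2 ^ m` does not change its 2-adic valuation, so the terms
`α_{2^m + 1}, …, α_{2^{m+1} - 1}` repeat `α_1, …, α_{2^m - 1}`. Writing `S_m = ∑_{0<i<2^m} α_i`, this gives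
`S_{m+1} = 2 S_m + α_{2^m} = 2 S_m + (3^m + 1)/2`, and `2 S_m = 3^m - 1` follows by induction.
-/

/-- α_n = (3^k + 1)/2 where n = 2^k(2j+1), i.e. k = v₂(n). -/
def alphaSeq (n : ℕ) : ℕ := (3 ^ (n.factorization 2) + 1) / 2

theorem Nat.factorization_add_of_lt {p a b : ℕ} (hp : p.Prime) (hb : b ≠ 0)
    (h : b.factorization p < a.factorization p) :
    (a + b).factorization p = b.factorization p := by
  have ha : a ≠ 0 := by rintro rfl; simp at h
  have hab : a + b ≠ 0 := by omega
  refine le_antisymm ?_ ?_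
  · by_contra! hlt
    have hdvd_a : p ^ (b.factorization p + 1) ∣ a := (hp.pow_dvd_iff_le_factorization ha).mpr h
    have hdvd_ab : p ^ (b.factorization p + 1) ∣ a + b :=
      (hp.pow_dvd_iff_le_factorization hab).mpr hlt
    have := (hp.pow_dvd_iff_le_factorization hb).mp ((Nat.dvd_add_right hdvd_a).mp hdvd_ab)
    omega
  · exact (hp.pow_dvd_iff_le_factorization hab).mp
      (dvd_add ((hp.pow_dvd_iff_le_factorization ha).mpr h.le) (Nat.ordProj_dvd b p))

theorem Nat.factorization_two_pow_add {m i : ℕ} (hi : i ≠ 0) (him : i < 2 ^ m) :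
    (2 ^ m + i).factorization 2 = i.factorization 2 := by
  refine Nat.factorization_add_of_lt Nat.prime_two hi ?_
  rw [Nat.factorization_pow_self Nat.prime_two]
  exact (Nat.pow_lt_pow_iff_right (by norm_num)).mp ((Nat.ordProj_le 2 hi).trans_lt him)

theorem alphaSeq_two_pow_add {m i : ℕ} (hi : i ≠ 0) (him : i < 2 ^ m) :
    alphaSeq (2 ^ m + i) = alphaSeq i := by
  rw [alphaSeq, alphaSeq, Nat.factorization_two_pow_add hi him]

theorem two_mul_alphaSeq_two_pow (m : ℕ) : 2 * alphaSeq (2 ^ m) = 3 ^ m + 1 := by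
  have h3 : 3 ^ m % 2 = 1 := Nat.odd_iff.mp (Odd.pow (by decide))
  rw [alphaSeq, Nat.factorization_pow_self Nat.prime_two]
  omega

theorem sum_alphaSeq_Ico_two_pow_succ (m : ℕ) :
    ∑ i ∈ Finset.Ico 1 (2 ^ (m + 1)), alphaSeq i =
      2 * ∑ i ∈ Finset.Ico 1 (2 ^ m), alphaSeq i + alphaSeq (2 ^ m) := by
  have hm : 1 ≤ 2 ^ m := Nat.one_le_two_pow
  have upper : ∑ i ∈ Finset.Ico (2 ^ m + 1) (2 ^ (m + 1)), alphaSeq i =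
      ∑ i ∈ Finset.Ico 1 (2 ^ m), alphaSeq i := by
    rw [pow_succ, mul_two, add_comm (2 ^ m) 1, ← Finset.sum_Ico_add']
    refine Finset.sum_congr rfl fun i hi => ?_
    rw [Finset.mem_Ico] at hi
    rw [add_comm, alphaSeq_two_pow_add (by omega) hi.2]
  rw [← Finset.sum_Ico_consecutive _ hm (Nat.pow_le_pow_right two_pos m.le_succ),
    Finset.sum_eq_sum_Ico_succ_bot (Nat.pow_lt_pow_right one_lt_two m.lt_succ_self), upper]
  ring

theorem two_mul_sum_alphaSeq_Ico (m : ℕ) :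
    2 * ∑ i ∈ Finset.Ico 1 (2 ^ m), alphaSeq i = 3 ^ m - 1 := by
  induction m with
  | zero => simp
  | succ m ih =>
    have h3 : 1 ≤ 3 ^ m := Nat.one_le_pow _ _ three_pos
    rw [sum_alphaSeq_Ico_two_pow_succ, mul_add, ih, two_mul_alphaSeq_two_pow, pow_succ]
    omega

/-- ∑_{i=1}^{2^m−1} α_i = (3^m − 1)/2 for all m ≥ 1. -/
theorem stmt8 : ∀ m : ℕ, 1 ≤ m →
    ∑ i ∈ Finset.Icc 1 (2 ^ m - 1), alphaSeq i = (3 ^ m - 1) / 2 := by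
  intro m _
  rw [Finset.Icc_sub_one_right_eq_Ico_of_not_isMin (by simp), ← two_mul_sum_alphaSeq_Ico]
  omega
end
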